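/- arXiv:1210.3855 — 2 statements merged into one kernel-verified Lean document; each statement's English description precedes it below -/
import Mathlib

section
/- Let R be a Noetherian ring and let N and Q be finitely generated R-modules. Then the length of the direct sum satisfies len_R (N × Q) = len_R N ♯ len_R Q, where ♯ is the natural (Hessenberg) sum of ordinals. (This is the split case of semi-additivity: a split short exact sequence 0 → N → M → Q → 0 satisfies len_R M = len_R Q ♯ len_R N.) -/
/-!
In the product order on `α × β` the rank for `>` obeys the recursion that defines `♯`, so
`rank (a, b) = rank a ♯ rank b`. Rank cannot drop along a strictly monotone map, and both
`P ↦ (P ∩ N, image of P in Q)` and `(A, B) ↦ A × B` are strictly monotone maps between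
`Submodule R (N × Q)` and `Submodule R N × Submodule R Q` sending `⊥` to `⊥`. Hence
`len (N × Q) = rank (⊥, ⊥) = len N ♯ len Q`.
-/

namespace Ordinal

/-- Natural (Hessenberg) sum of ordinals, as `Ordinal.nadd` in Mathlib of December 2024
(`Mathlib/SetTheory/Ordinal/NaturalOps.lean`, since removed from Mathlib). -/
noncomputable def nadd.{w} : Ordinal.{w} → Ordinal.{w} → Ordinal.{w}
  | a, b =>
    max (blsub.{w, w} a fun a' _ => nadd a' b) (blsub.{w, w} b fun b' _ => nadd a b')
termination_by o₁ o₂ => (o₁, o₂)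

end Ordinal

infixl:65 " ♯ " => Ordinal.nadd

open Ordinal

/-- The ordinal length of a Noetherian module: the rank of the zero submodule in the
well-founded order of submodules under reverse inclusion, i.e.
`rank N = sup { rank N' + 1 : N ⊊ N' }` and `len M = rank ⊥`. -/
noncomputable def moduleLength (R M : Type*) [Ring R] [AddCommGroup M] [Module R M]
    [IsNoetherian R M] : Ordinal :=
  IsWellFounded.rank (α := Submodule R M) (· > ·) ⊥

universe u v

namespace Ordinal

theorem nadd_le_iff {a b c : Ordinal} :
    a ♯ b ≤ c ↔ (∀ a' < a, a' ♯ b < c) ∧ (∀ b' < b, a ♯ b' < c) := by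
  rw [nadd, max_le_iff, blsub_le_iff, blsub_le_iff]

theorem nadd_lt_nadd_left {b c : Ordinal} (h : b < c) (a : Ordinal) : a ♯ b < a ♯ c := by
  rw [nadd.eq_1 a c]
  exact (lt_blsub (fun b' _ => a ♯ b') b h).trans_le (le_max_right _ _)

theorem nadd_lt_nadd_right {a b : Ordinal} (h : a < b) (c : Ordinal) : a ♯ c < b ♯ c := by
  rw [nadd.eq_1 b c]
  exact (lt_blsub (fun a' _ => a' ♯ c) a h).trans_le (le_max_left _ _)

theorem nadd_le_nadd {a b c d : Ordinal} (hab : a ≤ b) (hcd : c ≤ d) : a ♯ c ≤ b ♯ d :=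
  (StrictMono.monotone (fun _ _ h => nadd_lt_nadd_right h c) hab).trans
    (StrictMono.monotone (fun _ _ h => nadd_lt_nadd_left h b) hcd)

theorem nadd_lt_nadd_of_lt_of_le {a b c d : Ordinal} (hab : a < b) (hcd : c ≤ d) :
    a ♯ c < b ♯ d :=
  (nadd_lt_nadd_right hab c).trans_le (nadd_le_nadd le_rfl hcd)

theorem nadd_lt_nadd_of_le_of_lt {a b c d : Ordinal} (hab : a ≤ b) (hcd : c < d) :
    a ♯ c < b ♯ d :=
  (nadd_le_nadd hab le_rfl).trans_lt (nadd_lt_nadd_left hcd b)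

end Ordinal

namespace IsWellFounded

variable {α : Type u} {r : α → α → Prop} [IsWellFounded α r]

theorem lt_rank_iff {o : Ordinal} {a : α} : o < rank r a ↔ ∃ b, r b a ∧ o ≤ rank r b := by
  simp only [rank_eq r a, Ordinal.lt_iSup_iff, Order.lt_succ_iff, Subtype.exists, exists_prop]

end IsWellFounded

namespace WellFoundedGT

open IsWellFounded

variable {α β : Type u} [PartialOrder α] [PartialOrder β] [WellFoundedGT α] [WellFoundedGT β]

theorem rank_le_rank_of_strictMono {f : α → β} (hf : StrictMono f) (a : α) :
    rank (· > ·) a ≤ rank (· > ·) (f a) := by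
  induction a using IsWellFounded.induction (α := α) (· > ·) with
  | ind a ih =>
    rw [rank_eq]
    exact Ordinal.iSup_le fun b => Order.succ_le_of_lt
      ((ih b b.2).trans_lt (rank_lt_of_rel (hf b.2)))

theorem rank_prod (p : α × β) :
    rank (· > ·) p = rank (· > ·) p.1 ♯ rank (· > ·) p.2 := by
  induction p using IsWellFounded.induction (α := α × β) (· > ·) with
  | ind p ih =>
  obtain ⟨a, b⟩ := p
  refine le_antisymm ?_ (nadd_le_iff.2 ⟨fun o ho => ?_, fun o ho => ?_⟩)
  · rw [rank_eq]
    refine Ordinal.iSup_le fun ⟨⟨a', b'⟩, hp⟩ => Order.succ_le_of_lt ?_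
    rw [ih _ hp]
    rcases Prod.lt_iff.1 hp with ⟨ha, hb⟩ | ⟨ha, hb⟩
    · exact nadd_lt_nadd_of_lt_of_le (rank_lt_of_rel ha) (rank_strictAnti.antitone hb)
    · exact nadd_lt_nadd_of_le_of_lt (rank_strictAnti.antitone ha) (rank_lt_of_rel hb)
  · obtain ⟨a', ha, ho⟩ := lt_rank_iff.1 ho
    have hp : ((a', b) : α × β) > (a, b) := Prod.lt_iff.2 (Or.inl ⟨ha, le_rfl⟩)
    calc o ♯ rank (· > ·) b ≤ rank (· > ·) a' ♯ rank (· > ·) b := nadd_le_nadd ho le_rfl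
      _ = rank (· > ·) (a', b) := (ih _ hp).symm
      _ < rank (· > ·) (a, b) := rank_lt_of_rel hp
  · obtain ⟨b', hb, ho⟩ := lt_rank_iff.1 ho
    have hp : ((a, b') : α × β) > (a, b) := Prod.lt_iff.2 (Or.inr ⟨le_rfl, hb⟩)
    calc rank (· > ·) a ♯ o ≤ rank (· > ·) a ♯ rank (· > ·) b' := nadd_le_nadd le_rfl ho
      _ = rank (· > ·) (a, b') := (ih _ hp).symm
      _ < rank (· > ·) (a, b) := rank_lt_of_rel hp

end WellFoundedGT

open Submodule

theorem Function.Exact.strictMono_comap_prod_map {R M₁ M M₂ : Type*} [Ring R]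
    [AddCommGroup M₁] [AddCommGroup M] [AddCommGroup M₂]
    [Module R M₁] [Module R M] [Module R M₂] {f : M₁ →ₗ[R] M} {g : M →ₗ[R] M₂}
    (hfg : Function.Exact f g) :
    StrictMono fun P : Submodule R M => (P.comap f, P.map g) := by
  intro P P' hlt
  refine lt_of_le_of_ne ⟨comap_mono hlt.le, map_mono hlt.le⟩ fun heq =>
    hlt.ne (le_antisymm hlt.le fun x hx => ?_)
  obtain ⟨hcomap, hmap⟩ := Prod.mk.inj heq
  obtain ⟨y, hy, hxy⟩ : g x ∈ P.map g := hmap ▸ mem_map_of_mem hx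
  obtain ⟨z, hz⟩ := (hfg (x - y)).1 (by simp [hxy])
  have hzP : z ∈ P.comap f := hcomap ▸ show f z ∈ P' from hz ▸ sub_mem hx (hlt.le hy)
  simpa [hz] using add_mem (mem_comap.1 hzP) hy

theorem Submodule.prod_strictMono {R M M₂ : Type*} [Ring R] [AddCommGroup M] [AddCommGroup M₂]
    [Module R M] [Module R M₂] :
    StrictMono fun p : Submodule R M × Submodule R M₂ => p.1.prod p.2 := by
  refine Monotone.strictMono_of_injective (fun _ _ h => prod_mono h.1 h.2) ?_
  exact Function.LeftInverse.injective (g := fun P => (P.comap (LinearMap.inl R M M₂),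
    P.map (LinearMap.snd R M M₂))) fun p => Prod.ext (prod_comap_inl _ _) (prod_map_snd _ _)

open IsWellFounded WellFoundedGT

/-- The split case of semi-additivity: the ordinal length of a direct sum is the natural
(Hessenberg) sum of the ordinal lengths of the factors. -/
theorem moduleLength_prod
    (R : Type u) [CommRing R] [IsNoetherianRing R]
    (N Q : Type v) [AddCommGroup N] [AddCommGroup Q]
    [Module R N] [Module R Q] [Module.Finite R N] [Module.Finite R Q] :
    moduleLength R (N × Q) = moduleLength R N ♯ moduleLength R Q := by
  have hrank_bot : rank (· > ·) ((⊥, ⊥) : Submodule R N × Submodule R Q) =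
      moduleLength R N ♯ moduleLength R Q :=
    rank_prod _
  refine le_antisymm ?_ ?_
  · calc moduleLength R (N × Q)
        ≤ rank (· > ·) ((⊥ : Submodule R (N × Q)).comap (LinearMap.inl R N Q),
            (⊥ : Submodule R (N × Q)).map (LinearMap.snd R N Q)) :=
          rank_le_rank_of_strictMono Function.Exact.inl_snd.strictMono_comap_prod_map ⊥
      _ = _ := by rw [comap_bot, ker_inl, Submodule.map_bot, hrank_bot]
  · calc moduleLength R N ♯ moduleLength R Q
        ≤ rank (· > ·) ((⊥ : Submodule R N).prod (⊥ : Submodule R Q)) :=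
          hrank_bot.symm.trans_le (rank_le_rank_of_strictMono prod_strictMono _)
      _ = moduleLength R (N × Q) := by rw [prod_bot]; rfl
end

section
/- Let R be a Noetherian ring of finite Krull dimension and let x ∈ R be a non-zerodivisor that is not a unit. Then log_ω(len(R/xR)) < log_ω(len R); that is, the degree of the Cantor normal form of the ordinal length of R/xR is strictly less than that of the ordinal length of R. -/
/-!
Multiplication by the non-zerodivisor `x` identifies `R` with the submodule `xR`, and for any
submodule `N ≤ M` one has `len (M/N) + len N ≤ len M`. Hence `len (R/xR) + len R = len R`, and
such an absorption `a + b = b` forces `a * ω ≤ b`, so `log_ω b ≥ log_ω a + 1`.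
-/

open Ordinal

universe u

theorem Ordinal.log_lt_log_of_mul_le {a b c : Ordinal} (hb : 1 < b) (ha : a ≠ 0)
    (h : a * b ≤ c) : log b a < log b c := by
  have hlog : log b b = 1 := by simpa using log_opow hb 1
  calc log b a < log b a + log b b := by rw [hlog]; exact Order.lt_add_one_iff.2 le_rfl
    _ ≤ log b (a * b) := add_log_le_log_mul b ha (zero_lt_one.trans hb).ne'
    _ ≤ log b c := log_mono_right b h

section Rank

variable {α β : Type u} {r : α → α → Prop} {s : β → β → Prop}
  [IsWellFounded α r] [IsWellFounded β s]

theorem RelHom.rank_le (f : r →r s) (a : α) :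
    IsWellFounded.rank r a ≤ IsWellFounded.rank s (f a) := by
  induction a using IsWellFounded.induction r with
  | _ a ih =>
    rw [IsWellFounded.rank_eq]
    exact Ordinal.iSup_le fun ⟨b, hb⟩ ↦
      Order.succ_le_of_lt <| (ih b hb).trans_lt (IsWellFounded.rank_lt_of_rel (f.map_rel hb))

theorem RelIso.rank_eq (e : r ≃r s) (a : α) :
    IsWellFounded.rank s (e a) = IsWellFounded.rank r a :=
  le_antisymm (by simpa using e.symm.toRelEmbedding.toRelHom.rank_le (e a))
    (e.toRelEmbedding.toRelHom.rank_le a)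

end Rank

section ModuleLength

variable {R M : Type u} [Ring R] [AddCommGroup M] [Module R M] [IsNoetherian R M]

theorem LinearEquiv.moduleLength_eq {M₂ : Type u} [AddCommGroup M₂] [Module R M₂]
    [IsNoetherian R M₂] (e : M ≃ₗ[R] M₂) : moduleLength R M = moduleLength R M₂ :=
  ((Submodule.orderIsoMapComap e).toRelIsoLT.swap.rank_eq ⊥).symm.trans
    (congrArg _ (Submodule.map_bot _))

theorem moduleLength_pos [Nontrivial M] : 0 < moduleLength R M :=
  pos_of_gt (IsWellFounded.rank_lt_of_rel (bot_lt_top : (⊥ : Submodule R M) < ⊤))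

theorem moduleLength_quotient_le_rank (N : Submodule R M) :
    moduleLength R (M ⧸ N) ≤ IsWellFounded.rank (· > ·) N := by
  simpa [moduleLength] using RelHom.rank_le (r := ((· > ·) : Submodule R (M ⧸ N) → _ → Prop))
    (s := ((· > ·) : Submodule R M → _ → Prop))
    ⟨Submodule.comap N.mkQ, fun h ↦ Submodule.comap_strictMono_of_surjective N.mkQ_surjective h⟩ ⊥

/- Ranks are measured from the top, so the part of a chain lying above `N` contributes the
left summand. -/
theorem moduleLength_quotient_add_rank_le (N : Submodule R M) (P : Submodule R N) :
    moduleLength R (M ⧸ N) + IsWellFounded.rank (· > ·) P ≤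
      IsWellFounded.rank (· > ·) (P.map N.subtype) := by
  induction P using IsWellFounded.induction (α := Submodule R N) (· > ·) with
  | _ P ih =>
    rw [IsWellFounded.rank_eq]
    rcases isEmpty_or_nonempty {Q // Q > P} with h | h
    · rw [ciSup_of_empty, Ordinal.bot_eq_zero, add_zero]
      exact (moduleLength_quotient_le_rank N).trans
        (WellFoundedGT.rank_strictAnti.antitone (Submodule.map_subtype_le N P))
    · rw [Ordinal.add_iSup]
      refine Ordinal.iSup_le fun ⟨Q, hQ⟩ ↦ ?_
      rw [Order.succ_eq_add_one, ← add_assoc, Order.add_one_le_iff]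
      exact (ih Q hQ).trans_lt (IsWellFounded.rank_lt_of_rel
        (Submodule.map_strictMono_of_injective N.injective_subtype hQ))

theorem moduleLength_quotient_add_le (N : Submodule R M) :
    moduleLength R (M ⧸ N) + moduleLength R N ≤ moduleLength R M := by
  simpa [moduleLength] using moduleLength_quotient_add_rank_le N ⊥

end ModuleLength

theorem log_moduleLength_quotient_lt_general
    (R : Type u) [CommRing R] [IsNoetherianRing R]
    (x : R) (hx : x ∈ nonZeroDivisors R) (hxu : ¬ IsUnit x) :
    Ordinal.log ω (moduleLength R (R ⧸ Ideal.span {x})) <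
      Ordinal.log ω (moduleLength R R) := by
  have hmul : Function.Injective (LinearMap.toSpanSingleton R R x) := fun _ _ h ↦
    (mul_cancel_right_mem_nonZeroDivisors hx).1 h
  have hspan : moduleLength R R = moduleLength R (Ideal.span {x}) :=
    (LinearEquiv.ofInjective _ hmul ≪≫ₗ
      LinearEquiv.ofEq _ _ (LinearMap.span_singleton_eq_range R R x).symm).moduleLength_eq
  have : Nontrivial (R ⧸ Ideal.span {x}) :=
    Ideal.Quotient.nontrivial_iff.2 (by rwa [Ne, Ideal.span_singleton_eq_top])
  have habsorb := moduleLength_quotient_add_le (Ideal.span {x})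
  rw [← hspan] at habsorb
  exact log_lt_log_of_mul_le one_lt_omega0 moduleLength_pos.ne'
    (add_le_right_iff_mul_omega0_le.1 habsorb)

/-- If `x` is a non-zerodivisor and a non-unit in a finite-dimensional Noetherian ring `R`,
then the degree (base-`ω` logarithm) of `len (R/xR)` is strictly less than that of `len R`. -/
theorem log_moduleLength_quotient_lt
    (R : Type u) [CommRing R] [IsNoetherianRing R] (hdim : ringKrullDim R < ⊤)
    (x : R) (hx : x ∈ nonZeroDivisors R) (hxu : ¬ IsUnit x) :
    Ordinal.log ω (moduleLength R (R ⧸ Ideal.span {x})) <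
      Ordinal.log ω (moduleLength R R) :=
  log_moduleLength_quotient_lt_general R x hx hxu
end
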